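/- Let C₂, C₃ ≥ 0, let n ≥ 0 be an integer, and suppose (aₘ)_{m ≥ n+4} is a sequence of nonnegative reals with a_{n+4} ≤ C₂ and satisfying, for all m ≥ n+4, a_{m+1} ≤ a_m · C₃ · (1/Γ(1/4)) · ∫₀¹ (1−s)^(1/4 − 1) s^((m−n)/4 − 1) ds. Then aₘ ≤ C₂ · C₃^(m−(n+4)) / Γ((m−n)/4) for all m ≥ n+4. -/

import Mathlib

open intervalIntegral in
lemma beta_real_aux (x : ℝ) (hx : 0 < x) :
    (∫ s in (0:ℝ)..1, (1 - s) ^ ((1:ℝ)/4 - 1) * s ^ (x - 1))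
      = Real.Gamma (1/4) * Real.Gamma x / Real.Gamma (x + 1/4) := by
  have h14 : (0:ℝ) < 1/4 := by norm_num
  have hB := Complex.Gamma_mul_Gamma_eq_betaIntegral (s := (x:ℂ)) (t := ((1:ℂ)/4))
    (by simpa using hx) (by norm_num)
  have hGpos : 0 < Real.Gamma (x + 1/4) := Real.Gamma_pos_of_pos (by linarith)
  have hcoe : Complex.betaIntegral (x:ℂ) (1/4)
      = ((∫ s in (0:ℝ)..1, (1 - s) ^ ((1:ℝ)/4 - 1) * s ^ (x - 1) : ℝ) : ℂ) := by
    rw [Complex.betaIntegral, ← intervalIntegral.integral_ofReal]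
    refine intervalIntegral.integral_congr fun s hs => ?_
    rw [Set.uIcc_of_le (by norm_num : (0:ℝ) ≤ 1)] at hs
    rw [Complex.ofReal_mul, Complex.ofReal_cpow (by linarith [hs.2]),
      Complex.ofReal_cpow hs.1]
    push_cast
    ring
  rw [hcoe] at hB
  have : ((Real.Gamma x * Real.Gamma (1/4) : ℝ) : ℂ)
      = ((Real.Gamma (x + 1/4) : ℝ) : ℂ) *
        ((∫ s in (0:ℝ)..1, (1 - s) ^ ((1:ℝ)/4 - 1) * s ^ (x - 1) : ℝ) : ℂ) := by
    push_cast [← Complex.Gamma_ofReal]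
    convert hB using 2 <;> push_cast <;> ring
  have h2 : Real.Gamma x * Real.Gamma (1/4)
      = Real.Gamma (x + 1/4) * ∫ s in (0:ℝ)..1, (1 - s) ^ ((1:ℝ)/4 - 1) * s ^ (x - 1) := by
    exact_mod_cast this
  rw [eq_div_iff hGpos.ne']
  linarith [h2]

/-- Inductive Gamma-function bound for the iterated kernels in the Neumann series. -/
theorem stmt19 (C₂ C₃ : ℝ) (hC₂ : 0 ≤ C₂) (hC₃ : 0 ≤ C₃) (n : ℕ) (a : ℕ → ℝ)
    (ha : ∀ m, n + 4 ≤ m → 0 ≤ a m) (hinit : a (n + 4) ≤ C₂)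
    (hrec : ∀ m, n + 4 ≤ m →
      a (m + 1) ≤ a m * C₃ * (1 / Real.Gamma (1/4)) *
        ∫ s in (0:ℝ)..1, (1 - s) ^ ((1:ℝ)/4 - 1) * s ^ (((m:ℝ) - n)/4 - 1)) :
    ∀ m, n + 4 ≤ m →
      a m ≤ C₂ * C₃ ^ (m - (n + 4)) / Real.Gamma (((m:ℝ) - n)/4) := by
  intro m hm
  induction m, hm using Nat.le_induction with
  | base =>
    have h1 : (((n + 4 : ℕ):ℝ) - n)/4 = 1 := by push_cast; ring
    simpa [h1, Real.Gamma_one] using hinit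
  | succ m hm ih =>
    set x : ℝ := ((m:ℝ) - n)/4 with hxdef
    have hx : 0 < x := by
      have : (n:ℝ) + 4 ≤ (m:ℝ) := by exact_mod_cast hm
      unfold x; linarith
    have hGx : 0 < Real.Gamma x := Real.Gamma_pos_of_pos hx
    have hGx4 : 0 < Real.Gamma (x + 1/4) := Real.Gamma_pos_of_pos (by linarith)
    have hG14 : 0 < Real.Gamma (1/4) := Real.Gamma_pos_of_pos (by norm_num)
    have hrec' := hrec m hm
    rw [beta_real_aux x hx] at hrec'
    have hstep : a (m + 1) ≤ a m * C₃ * (Real.Gamma x / Real.Gamma (x + 1/4)) := by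
      have : a m * C₃ * (1 / Real.Gamma (1/4)) *
          (Real.Gamma (1/4) * Real.Gamma x / Real.Gamma (x + 1/4))
          = a m * C₃ * (Real.Gamma x / Real.Gamma (x + 1/4)) := by
        field_simp
      linarith [hrec', this.le]
    have hmono : a m * C₃ * (Real.Gamma x / Real.Gamma (x + 1/4)) ≤
        (C₂ * C₃ ^ (m - (n + 4)) / Real.Gamma x) * C₃ *
          (Real.Gamma x / Real.Gamma (x + 1/4)) := by
      have := ih
      have hnn : 0 ≤ C₃ * (Real.Gamma x / Real.Gamma (x + 1/4)) :=
        mul_nonneg hC₃ (div_nonneg hGx.le hGx4.le)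
      calc a m * C₃ * (Real.Gamma x / Real.Gamma (x + 1/4))
          = a m * (C₃ * (Real.Gamma x / Real.Gamma (x + 1/4))) := by ring
        _ ≤ (C₂ * C₃ ^ (m - (n + 4)) / Real.Gamma x) *
            (C₃ * (Real.Gamma x / Real.Gamma (x + 1/4))) :=
          mul_le_mul_of_nonneg_right ih hnn
        _ = _ := by ring
    have hxs : (((m+1:ℕ):ℝ) - n)/4 = x + 1/4 := by push_cast; unfold x; ring
    have hpow : m + 1 - (n + 4) = (m - (n + 4)) + 1 := by omega
    have heq : (C₂ * C₃ ^ (m - (n + 4)) / Real.Gamma x) * C₃ *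
          (Real.Gamma x / Real.Gamma (x + 1/4))
        = C₂ * C₃ ^ (m + 1 - (n + 4)) / Real.Gamma (x + 1/4) := by
      rw [hpow, pow_succ]
      field_simp
    rw [hxs]
    linarith [hstep, hmono, heq.le]
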